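/- Let γ^ε = f^ε ∘ γ ∘ (f^ε)^{−1} with f^0 = id, γ a Möbius transformation. Then ∂_ε|_{ε=0} log|(γ^ε)' ∘ f^ε|² = \dot f_z ∘ γ − \dot f_z, and ∂_ε|_{ε=0} [ ((γ^ε)''/(γ^ε)') ∘ f^ε ] = (\dot f_{zz} ∘ γ) γ' − \dot f_{zz} − (γ''/γ') \dot f_z. -/

import Mathlib

open Complex ComplexConjugate

/-- Wirtinger derivative ∂/∂z. -/
noncomputable def wd (f : ℂ → ℂ) (z : ℂ) : ℂ :=
  (1/2 : ℂ) * (fderiv ℝ f z 1 - Complex.I * fderiv ℝ f z Complex.I)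

/-- Wirtinger derivative ∂/∂z̄. -/
noncomputable def wdb (f : ℂ → ℂ) (z : ℂ) : ℂ :=
  (1/2 : ℂ) * (fderiv ℝ f z 1 + Complex.I * fderiv ℝ f z Complex.I)
noncomputable def Phiwd : (ℂ →L[ℝ] ℂ) →L[ℝ] ℂ :=
  (1/2 : ℂ) • (ContinuousLinearMap.apply ℝ ℂ (1:ℂ)
    - Complex.I • ContinuousLinearMap.apply ℝ ℂ (Complex.I))

noncomputable def Phiwdb : (ℂ →L[ℝ] ℂ) →L[ℝ] ℂ :=
  (1/2 : ℂ) • (ContinuousLinearMap.apply ℝ ℂ (1:ℂ)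
    + Complex.I • ContinuousLinearMap.apply ℝ ℂ (Complex.I))

@[simp] lemma Phiwd_apply (L : ℂ →L[ℝ] ℂ) :
    Phiwd L = (1/2 : ℂ) * (L 1 - Complex.I * L Complex.I) := by
  simp [Phiwd, smul_eq_mul]

@[simp] lemma Phiwdb_apply (L : ℂ →L[ℝ] ℂ) :
    Phiwdb L = (1/2 : ℂ) * (L 1 + Complex.I * L Complex.I) := by
  simp [Phiwdb, smul_eq_mul]; ring

lemma wd_eq_Phi (g : ℂ → ℂ) (x : ℂ) : wd g x = Phiwd (fderiv ℝ g x) := by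
  simp [wd]

lemma wdb_eq_Phi (g : ℂ → ℂ) (x : ℂ) : wdb g x = Phiwdb (fderiv ℝ g x) := by
  simp [wdb]

lemma wd_congr {f g : ℂ → ℂ} {x : ℂ} (h : f =ᶠ[nhds x] g) : wd f x = wd g x := by
  unfold wd; rw [h.fderiv_eq]

lemma fderivR_apply_of_complex {g : ℂ → ℂ} {x : ℂ} (h : DifferentiableAt ℂ g x) (v : ℂ) :
    fderiv ℝ g x v = deriv g x * v := by
  rw [h.fderiv_restrictScalars ℝ]
  have h2 : fderiv ℂ g x v = v • fderiv ℂ g x 1 := by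
    rw [← map_smul]; simp
  simp only [ContinuousLinearMap.coe_restrictScalars']
  rw [h2]
  have : fderiv ℂ g x 1 = deriv g x := by
    exact fderiv_apply_one_eq_deriv
  rw [this, smul_eq_mul, mul_comm]

lemma wd_of_diffC {g : ℂ → ℂ} {x : ℂ} (h : DifferentiableAt ℂ g x) : wd g x = deriv g x := by
  unfold wd
  rw [fderivR_apply_of_complex h, fderivR_apply_of_complex h]
  have : Complex.I * Complex.I = -1 := Complex.I_mul_I
  ring_nf
  rw [Complex.I_sq]; ring

lemma wdb_of_diffC {g : ℂ → ℂ} {x : ℂ} (h : DifferentiableAt ℂ g x) : wdb g x = 0 := by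
  unfold wdb
  rw [fderivR_apply_of_complex h, fderivR_apply_of_complex h]
  ring_nf
  rw [Complex.I_sq]; ring

lemma clm_decomp (L : ℂ →L[ℝ] ℂ) (v : ℂ) : L v = v.re • L 1 + v.im • L Complex.I := by
  have hv : v = v.re • (1:ℂ) + v.im • Complex.I := by
    rw [Complex.real_smul, Complex.real_smul, mul_one]
    exact (Complex.re_add_im v).symm
  conv_lhs => rw [hv]
  rw [map_add, map_smul, map_smul]

lemma diffC_of_wdb_zero {g : ℂ → ℂ} {x : ℂ} (hd : DifferentiableAt ℝ g x)
    (h : wdb g x = 0) : DifferentiableAt ℂ g x := by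
  set L : ℂ →L[ℂ] ℂ := (wd g x) • (ContinuousLinearMap.id ℂ ℂ) with hL
  have key : L.restrictScalars ℝ = fderiv ℝ g x := by
    apply ContinuousLinearMap.ext
    intro v
    have h1 : fderiv ℝ g x v = v.re • fderiv ℝ g x 1 + v.im • fderiv ℝ g x Complex.I :=
      clm_decomp _ v
    have hw : wd g x + wdb g x = fderiv ℝ g x 1 := by unfold wd wdb; ring
    have hw2 : Complex.I * wd g x - Complex.I * wdb g x = fderiv ℝ g x Complex.I := by
      unfold wd wdb
      ring_nf
      rw [Complex.I_sq]; ring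
    rw [h] at hw hw2
    simp only [add_zero, mul_zero, sub_zero] at hw hw2
    have : L.restrictScalars ℝ v = wd g x * v := by
      simp [hL, smul_eq_mul]
    rw [this, h1, ← hw, ← hw2]
    have hv : v = (v.re : ℂ) + v.im * Complex.I := (Complex.re_add_im v).symm
    rw [Complex.real_smul, Complex.real_smul]
    nth_rewrite 1 [hv]
    ring
  exact (hasFDerivAt_of_restrictScalars ℝ hd.hasFDerivAt key).differentiableAt

lemma deriv_eq_wd {g : ℂ → ℂ} {x : ℂ} (hd : DifferentiableAt ℝ g x)
    (h : wdb g x = 0) : HasDerivAt g (wd g x) x := by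
  have hC := diffC_of_wdb_zero hd h
  rw [wd_of_diffC hC]
  exact hC.hasDerivAt

@[simp] lemma wd_const (c x : ℂ) : wd (fun _ => c) x = 0 := by
  unfold wd; simp

@[simp] lemma wd_id (x : ℂ) : wd (fun z => z) x = 1 := by
  unfold wd
  rw [fderiv_id']
  simp
  norm_num

lemma wd_comp_outer {g h : ℂ → ℂ} {x : ℂ} (hg : DifferentiableAt ℂ g (h x))
    (hh : DifferentiableAt ℝ h x) :
    wd (fun z => g (h z)) x = deriv g (h x) * wd h x := by
  unfold wd
  have hc : fderiv ℝ (g ∘ h) x = (fderiv ℝ g (h x)).comp (fderiv ℝ h x) :=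
    fderiv_comp x (hg.restrictScalars ℝ) hh
  have : (fun z => g (h z)) = g ∘ h := rfl
  rw [this, hc]
  simp only [ContinuousLinearMap.comp_apply]
  rw [fderivR_apply_of_complex hg, fderivR_apply_of_complex hg]
  ring

lemma wd_comp_inner {g h : ℂ → ℂ} {x : ℂ} (hg : DifferentiableAt ℝ g (h x))
    (hh : DifferentiableAt ℂ h x) :
    wd (fun z => g (h z)) x = wd g (h x) * deriv h x := by
  unfold wd
  have hc : fderiv ℝ (g ∘ h) x = (fderiv ℝ g (h x)).comp (fderiv ℝ h x) :=
    fderiv_comp x hg (hh.restrictScalars ℝ)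
  have : (fun z => g (h z)) = g ∘ h := rfl
  rw [this, hc]
  simp only [ContinuousLinearMap.comp_apply]
  rw [fderivR_apply_of_complex hh, fderivR_apply_of_complex hh]
  set c := deriv h x
  rw [clm_decomp (fderiv ℝ g (h x)) (c * 1), clm_decomp (fderiv ℝ g (h x)) (c * Complex.I)]
  have hre1 : (c * 1).re = c.re := by simp
  have him1 : (c * 1).im = c.im := by simp
  have hre2 : (c * Complex.I).re = -c.im := by simp
  have him2 : (c * Complex.I).im = c.re := by simp
  rw [hre1, him1, hre2, him2, Complex.real_smul, Complex.real_smul, Complex.real_smul,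
    Complex.real_smul]
  have hc2 : (c.re : ℂ) + c.im * Complex.I = c := Complex.re_add_im c
  push_cast
  linear_combination ((1:ℂ)/2 * fderiv ℝ g (h x) 1 - Complex.I/2 * fderiv ℝ g (h x) Complex.I) * hc2 + ((c.im : ℂ) * fderiv ℝ g (h x) Complex.I / 2) * Complex.I_sq

lemma wd_mul {p q : ℂ → ℂ} {x : ℂ} (hp : DifferentiableAt ℝ p x) (hq : DifferentiableAt ℝ q x) :
    wd (fun z => p z * q z) x = p x * wd q x + q x * wd p x := by
  unfold wd
  rw [fderiv_fun_mul hp hq]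
  simp only [ContinuousLinearMap.add_apply, ContinuousLinearMap.smul_apply, smul_eq_mul]
  ring

lemma wd_log_normSq {B : ℂ → ℂ} {b : ℂ} (hB : HasDerivAt B b 0) (h0 : B 0 ≠ 0) :
    wd (fun ε => ((Real.log (Complex.normSq (B ε)) : ℝ) : ℂ)) 0 = b / B 0 := by
  set w := B 0 with hw
  have hns : Complex.normSq w ≠ 0 := by simpa using h0
  have hLB : HasFDerivAt B ((ContinuousLinearMap.smulRight (1 : ℂ →L[ℂ] ℂ) b).restrictScalars ℝ) 0 :=
    hB.hasFDerivAt.restrictScalars ℝ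
  have hre : HasFDerivAt (fun z : ℂ => z.re) (Complex.reCLM : ℂ →L[ℝ] ℝ) w :=
    Complex.reCLM.hasFDerivAt
  have him : HasFDerivAt (fun z : ℂ => z.im) (Complex.imCLM : ℂ →L[ℝ] ℝ) w :=
    Complex.imCLM.hasFDerivAt
  have hN : HasFDerivAt Complex.normSq
      ((w.re • (Complex.reCLM : ℂ →L[ℝ] ℝ) + w.re • Complex.reCLM)
        + (w.im • (Complex.imCLM : ℂ →L[ℝ] ℝ) + w.im • Complex.imCLM)) w := by
    have := (hre.mul hre).add (him.mul him)
    convert this using 2 <;> try rfl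
  have hlog := (Real.hasDerivAt_log hns).comp_hasFDerivAt 0 (hN.comp 0 hLB)
  have htot := Complex.ofRealCLM.hasFDerivAt.comp 0 hlog
  have htot' : HasFDerivAt (fun ε => ((Real.log (Complex.normSq (B ε)) : ℝ) : ℂ))
      (Complex.ofRealCLM.comp (((Complex.normSq w)⁻¹ • (((w.re • (Complex.reCLM : ℂ →L[ℝ] ℝ) + w.re • Complex.reCLM)
        + (w.im • (Complex.imCLM : ℂ →L[ℝ] ℝ) + w.im • Complex.imCLM)).comp
        ((ContinuousLinearMap.smulRight (1 : ℂ →L[ℂ] ℂ) b).restrictScalars ℝ))))) 0 := htot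
  have hfd := htot'.fderiv
  have h1 := congrArg (fun L => L 1) hfd
  have hI := congrArg (fun L => L Complex.I) hfd
  simp only [ContinuousLinearMap.coe_comp', Function.comp_apply,
    ContinuousLinearMap.smul_apply, ContinuousLinearMap.add_apply,
    ContinuousLinearMap.coe_restrictScalars', ContinuousLinearMap.smulRight_apply,
    ContinuousLinearMap.one_apply, Complex.reCLM_apply, Complex.imCLM_apply,
    Complex.ofRealCLM_apply, smul_eq_mul, one_smul, mul_one] at h1 hI
  clear_value w
  have goal : (1/2 : ℂ) * ((fderiv ℝ (fun ε => ((Real.log (Complex.normSq (B ε)) : ℝ) : ℂ)) 0) 1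
      - Complex.I * (fderiv ℝ (fun ε => ((Real.log (Complex.normSq (B ε)) : ℝ) : ℂ)) 0) Complex.I) = b / w := by
    rw [h1, hI]
    rw [eq_div_iff h0]
    simp only [one_mul, Complex.mul_re, Complex.mul_im, Complex.I_re, Complex.I_im]
    have hne : w.re^2 + w.im^2 ≠ 0 := by
      simpa [Complex.normSq_apply, pow_two] using hns
    rw [Complex.ext_iff]
    have hne2 : w.re ^ 2 * 2 + w.im ^ 2 * 2 ≠ 0 := by
      intro h; exact hne (by linarith)
    have hne3 : 2*(w.re*w.re + w.im*w.im) ≠ 0 := by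
      intro h; exact hne (by nlinarith)
    constructor <;>
    · simp [Complex.normSq_apply]
      field_simp [hne2]
      ring
  unfold wd
  exact goal

section SwapTest
variable {F : ℂ × ℂ → ℂ}

noncomputable def cright : ((ℂ × ℂ) →L[ℝ] ℂ) →L[ℝ] (ℂ →L[ℝ] ℂ) :=
  (ContinuousLinearMap.compL ℝ ℂ (ℂ × ℂ) ℂ).flip (ContinuousLinearMap.inr ℝ ℂ ℂ)

noncomputable def cleft : ((ℂ × ℂ) →L[ℝ] ℂ) →L[ℝ] (ℂ →L[ℝ] ℂ) :=
  (ContinuousLinearMap.compL ℝ ℂ (ℂ × ℂ) ℂ).flip (ContinuousLinearMap.inl ℝ ℂ ℂ)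

@[simp] lemma cright_apply (L : (ℂ × ℂ) →L[ℝ] ℂ) (v : ℂ) : cright L v = L (0, v) := by
  simp [cright]

@[simp] lemma cleft_apply (L : (ℂ × ℂ) →L[ℝ] ℂ) (v : ℂ) : cleft L v = L (v, 0) := by
  simp [cleft]

lemma hasFDerivAt_partial_snd (hF : ContDiff ℝ (⊤ : ℕ∞) F) (e w : ℂ) :
    HasFDerivAt (fun z => F (e, z)) ((fderiv ℝ F (e, w)).comp (ContinuousLinearMap.inr ℝ ℂ ℂ)) w :=
  ((hF.differentiable (by simp) (e, w)).hasFDerivAt).comp w (hasFDerivAt_prodMk_right e w)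

lemma hasFDerivAt_partial_fst (hF : ContDiff ℝ (⊤ : ℕ∞) F) (e w : ℂ) :
    HasFDerivAt (fun x => F (x, w)) ((fderiv ℝ F (e, w)).comp (ContinuousLinearMap.inl ℝ ℂ ℂ)) e :=
  ((hF.differentiable (by simp) (e, w)).hasFDerivAt).comp e (hasFDerivAt_prodMk_left e w)

end SwapTest

variable {F : ℂ × ℂ → ℂ}

lemma hasFDerivAt_wd_partial_snd (hF : ContDiff ℝ (⊤ : ℕ∞) F) (e w : ℂ) :
    HasFDerivAt (fun x : ℂ => wd (fun z => F (x, z)) w)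
      (Phiwd.comp (cright.comp ((fderiv ℝ (fderiv ℝ F) (e, w)).comp
        (ContinuousLinearMap.inl ℝ ℂ ℂ)))) e := by
  have hrep : (fun x : ℂ => wd (fun z => F (x, z)) w)
      = fun x => Phiwd (cright (fderiv ℝ F (x, w))) := by
    funext x
    rw [wd_eq_Phi, (hasFDerivAt_partial_snd hF x w).fderiv]
    rfl
  rw [hrep]
  exact Phiwd.hasFDerivAt.comp e ((cright.hasFDerivAt).comp e
    ((((hF.fderiv_right (m := (⊤ : ℕ∞)) (by simp)).differentiable (by simp) (e, w)).hasFDerivAt).comp e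
      (hasFDerivAt_prodMk_left e w)))

lemma hasFDerivAt_wd_partial_fst (hF : ContDiff ℝ (⊤ : ℕ∞) F) (e w : ℂ) :
    HasFDerivAt (fun z : ℂ => wd (fun x => F (x, z)) e)
      (Phiwd.comp (cleft.comp ((fderiv ℝ (fderiv ℝ F) (e, w)).comp
        (ContinuousLinearMap.inr ℝ ℂ ℂ)))) w := by
  have hrep : (fun z : ℂ => wd (fun x => F (x, z)) e)
      = fun z => Phiwd (cleft (fderiv ℝ F (e, z))) := by
    funext z
    rw [wd_eq_Phi, (hasFDerivAt_partial_fst hF e z).fderiv]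
    rfl
  rw [hrep]
  exact Phiwd.hasFDerivAt.comp w ((cleft.hasFDerivAt).comp w
    ((((hF.fderiv_right (m := (⊤ : ℕ∞)) (by simp)).differentiable (by simp) (e, w)).hasFDerivAt).comp w
      (hasFDerivAt_prodMk_right e w)))

lemma wd_wd_swap (hF : ContDiff ℝ (⊤ : ℕ∞) F) (e w : ℂ) :
    wd (fun x => wd (fun z => F (x, z)) w) e = wd (fun z => wd (fun x => F (x, z)) e) w := by
  have hsymm : IsSymmSndFDerivAt ℝ F (e, w) :=
    hF.contDiffAt.isSymmSndFDerivAt (by norm_num; exact le_trans (by norm_num : (2:WithTop ℕ∞) ≤ ((2:ℕ∞):WithTop ℕ∞)) (WithTop.coe_le_coe.mpr le_top))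
  rw [wd_eq_Phi, wd_eq_Phi, (hasFDerivAt_wd_partial_snd hF e w).fderiv,
    (hasFDerivAt_wd_partial_fst hF e w).fderiv]
  simp only [ContinuousLinearMap.coe_comp', Function.comp_apply, cright_apply, cleft_apply,
    ContinuousLinearMap.inl_apply, ContinuousLinearMap.inr_apply, Phiwd_apply]
  rw [hsymm (1, 0) (0, 1), hsymm (1, 0) (0, Complex.I), hsymm (Complex.I, 0) (0, 1),
    hsymm (Complex.I, 0) (0, Complex.I)]
  ring

lemma wdb_wd_swap (hF : ContDiff ℝ (⊤ : ℕ∞) F) (e w : ℂ) :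
    wdb (fun x => wd (fun z => F (x, z)) w) e = wd (fun z => wdb (fun x => F (x, z)) e) w := by
  have hsymm : IsSymmSndFDerivAt ℝ F (e, w) :=
    hF.contDiffAt.isSymmSndFDerivAt (by norm_num; exact le_trans (by norm_num : (2:WithTop ℕ∞) ≤ ((2:ℕ∞):WithTop ℕ∞)) (WithTop.coe_le_coe.mpr le_top))
  have h1 : (fun z : ℂ => wdb (fun x => F (x, z)) e)
      = fun z => Phiwdb (cleft (fderiv ℝ F (e, z))) := by
    funext z
    rw [wdb_eq_Phi, (hasFDerivAt_partial_fst hF e z).fderiv]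
    rfl
  have h2 : HasFDerivAt (fun z : ℂ => wdb (fun x => F (x, z)) e)
      (Phiwdb.comp (cleft.comp ((fderiv ℝ (fderiv ℝ F) (e, w)).comp
        (ContinuousLinearMap.inr ℝ ℂ ℂ)))) w := by
    rw [h1]
    exact Phiwdb.hasFDerivAt.comp w ((cleft.hasFDerivAt).comp w
      ((((hF.fderiv_right (m := (⊤ : ℕ∞)) (by simp)).differentiable (by simp) (e, w)).hasFDerivAt).comp w
        (hasFDerivAt_prodMk_right e w)))
  rw [wdb_eq_Phi, wd_eq_Phi, (hasFDerivAt_wd_partial_snd hF e w).fderiv, h2.fderiv]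
  simp only [ContinuousLinearMap.coe_comp', Function.comp_apply, cright_apply, cleft_apply,
    ContinuousLinearMap.inl_apply, ContinuousLinearMap.inr_apply, Phiwd_apply, Phiwdb_apply]
  rw [hsymm (1, 0) (0, 1), hsymm (1, 0) (0, Complex.I), hsymm (Complex.I, 0) (0, 1),
    hsymm (Complex.I, 0) (0, Complex.I)]
  ring

lemma contDiff_wd_partial (hF : ContDiff ℝ (⊤ : ℕ∞) F) :
    ContDiff ℝ (⊤ : ℕ∞) (fun p : ℂ × ℂ => wd (fun z => F (p.1, z)) p.2) := by
  have hrep : (fun p : ℂ × ℂ => wd (fun z => F (p.1, z)) p.2)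
      = fun p => Phiwd (cright (fderiv ℝ F p)) := by
    funext p
    rw [wd_eq_Phi, (hasFDerivAt_partial_snd hF p.1 p.2).fderiv]
    rfl
  rw [hrep]
  exact Phiwd.contDiff.comp (cright.contDiff.comp (hF.fderiv_right (by simp)))


/-- for `γ^ε = f^ε∘γ∘(f^ε)^{−1}` with `f^0 = id`,
`∂_ε|₀ log|(γ^ε)'∘f^ε|² = ḟ_z∘γ − ḟ_z` and
`∂_ε|₀ ((γ^ε)''/(γ^ε)')∘f^ε = (ḟ_{zz}∘γ)γ' − ḟ_{zz} − (γ''/γ')ḟ_z`,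
where ε is a complex parameter and ∂_ε|₀ is the Wirtinger ε-derivative at 0. -/
theorem variation_of_log_gamma_prime
    (Ω V : Set ℂ) (hΩ : IsOpen Ω) (hV : IsOpen V)
    (γ : ℂ → ℂ) (hmaps : Set.MapsTo γ Ω Ω)
    (hγ : ∀ z ∈ Ω, AnalyticAt ℂ γ z) (hγ' : ∀ z ∈ Ω, deriv γ z ≠ 0)
    (f : ℂ → ℂ → ℂ) (γe : ℂ → ℂ → ℂ)
    (hf : ContDiff ℝ (⊤ : ℕ∞) (fun p : ℂ × ℂ => f p.1 p.2))
    (hf0 : f 0 = id)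
    (hhol : ∀ z ε₀ : ℂ, DifferentiableAt ℂ (fun ε => f ε z) ε₀)
    (hg0 : γe 0 = γ)
    (hmemV : ∀ ε : ℂ, ∀ z ∈ Ω, f ε z ∈ V)
    (hγe : ContDiffOn ℝ (⊤ : ℕ∞) (fun p : ℂ × ℂ => γe p.1 p.2) (Set.univ ×ˢ V))
    (hγez : ∀ ε : ℂ, ∀ w ∈ V, AnalyticAt ℂ (γe ε) w)
    (hrel : ∀ ε : ℂ, ∀ z ∈ Ω, f ε (γ z) = γe ε (f ε z)) :
    ∀ z ∈ Ω,
      wd (fun ε => ((Real.log (Complex.normSq (deriv (γe ε) (f ε z))) : ℝ) : ℂ)) 0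
        = wd (fun w => wd (fun ε => f ε w) 0) (γ z)
          - wd (fun w => wd (fun ε => f ε w) 0) z
      ∧
      wd (fun ε => deriv (deriv (γe ε)) (f ε z) / deriv (γe ε) (f ε z)) 0
        = wd (fun w => wd (fun v => wd (fun ε => f ε v) 0) w) (γ z) * deriv γ z
          - wd (fun w => wd (fun v => wd (fun ε => f ε v) 0) w) z
          - (deriv (deriv γ) z / deriv γ z) * wd (fun w => wd (fun ε => f ε w) 0) z := by
  intro z hz
  -- abbreviations
  set H : ℂ → ℂ → ℂ := fun e w => wd (f e) w with hHdef
  set K : ℂ → ℂ → ℂ := fun e w => wd (fun t => H e t) w with hKdef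
  set fd : ℂ → ℂ := fun w => wd (fun ε => f ε w) 0 with hfddef
  -- joint smoothness
  have hHsm : ContDiff ℝ (⊤ : ℕ∞) (fun p : ℂ × ℂ => H p.1 p.2) := contDiff_wd_partial hf
  have hKsm : ContDiff ℝ (⊤ : ℕ∞) (fun p : ℂ × ℂ => K p.1 p.2) := contDiff_wd_partial hHsm
  -- basic differentiability in second variable
  have hfd2 : ∀ ε w, DifferentiableAt ℝ (f ε) w :=
    fun ε w => (hasFDerivAt_partial_snd hf ε w).differentiableAt
  have hHd2 : ∀ ε w, DifferentiableAt ℝ (H ε) w :=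
    fun ε w => (hasFDerivAt_partial_snd hHsm ε w).differentiableAt
  -- values at ε = 0
  have fact3 : ∀ w, H 0 w = 1 := by
    intro w
    rw [hHdef]
    simp only [hf0]
    have : (id : ℂ → ℂ) = fun t => t := rfl
    rw [this, wd_id]
  have fact4 : ∀ w, K 0 w = 0 := by
    intro w
    rw [hKdef]
    simp only
    have : (fun t => H 0 t) = fun _ => (1:ℂ) := funext fun t => fact3 t
    rw [this, wd_const]
  -- anti-holomorphic derivatives vanish
  have hwdbH : ∀ w, wdb (fun e => H e w) 0 = 0 := by
    intro w
    have := wdb_wd_swap hf 0 w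
    rw [hHdef]
    simp only
    rw [this]
    have h0 : (fun t : ℂ => wdb (fun x => f x t) 0) = fun _ => (0:ℂ) :=
      funext fun t => wdb_of_diffC (hhol t 0)
    rw [h0, wd_const]
  have hwdbK : ∀ w, wdb (fun e => K e w) 0 = 0 := by
    intro w
    have := wdb_wd_swap hHsm 0 w
    rw [hKdef]
    simp only
    rw [this]
    have h0 : (fun t : ℂ => wdb (fun x => H x t) 0) = fun _ => (0:ℂ) :=
      funext fun t => hwdbH t
    rw [h0, wd_const]
  -- ε-derivatives at 0
  have fact1 : ∀ w, HasDerivAt (fun e => H e w) (wd fd w) 0 := by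
    intro w
    have hd : DifferentiableAt ℝ (fun e => H e w) 0 :=
      (hasFDerivAt_partial_fst hHsm 0 w).differentiableAt
    have h := deriv_eq_wd hd (hwdbH w)
    have hswap : wd (fun e => H e w) 0 = wd fd w := by
      rw [hHdef, hfddef]
      simp only
      exact wd_wd_swap hf 0 w
    rwa [hswap] at h
  have fact2 : ∀ w, HasDerivAt (fun e => K e w) (wd (fun t => wd fd t) w) 0 := by
    intro w
    have hd : DifferentiableAt ℝ (fun e => K e w) 0 :=
      (hasFDerivAt_partial_fst hKsm 0 w).differentiableAt
    have h := deriv_eq_wd hd (hwdbK w)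
    have hswap : wd (fun e => K e w) 0 = wd (fun t => wd fd t) w := by
      rw [hKdef]
      simp only
      rw [wd_wd_swap hHsm 0 w]
      have : (fun t : ℂ => wd (fun x => H x t) 0) = fun t => wd fd t := by
        funext t
        rw [hHdef, hfddef]
        simp only
        exact wd_wd_swap hf 0 t
      rw [this]
    rwa [hswap] at h
  -- first z-derivative of the conjugation relation
  have eq1 : ∀ e : ℂ, ∀ x ∈ Ω, H e (γ x) * deriv γ x = deriv (γe e) (f e x) * H e x := by
    intro e x hx
    have hγd : DifferentiableAt ℂ γ x := (hγ x hx).differentiableAt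
    have hl : wd (fun t => f e (γ t)) x = H e (γ x) * deriv γ x :=
      wd_comp_inner (hfd2 e (γ x)) hγd
    have hr : wd (fun t => γe e (f e t)) x = deriv (γe e) (f e x) * H e x :=
      wd_comp_outer ((hγez e _ (hmemV e x hx)).differentiableAt) (hfd2 e x)
    have heq : (fun t => f e (γ t)) =ᶠ[nhds x] (fun t => γe e (f e t)) := by
      filter_upwards [hΩ.mem_nhds hx] with t ht
      exact hrel e t ht
    rw [← hl, wd_congr heq, hr]
  -- second z-derivative of the conjugation relation
  have eq2 : ∀ e : ℂ, ∀ x ∈ Ω,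
      H e (γ x) * deriv (deriv γ) x + deriv γ x * (K e (γ x) * deriv γ x)
        = deriv (γe e) (f e x) * K e x
          + H e x * (deriv (deriv (γe e)) (f e x) * H e x) := by
    intro e x hx
    have hγd : DifferentiableAt ℂ γ x := (hγ x hx).differentiableAt
    have hγAn : AnalyticOnNhd ℂ γ Ω := fun t ht => hγ t ht
    have hd1 : DifferentiableAt ℂ (deriv γ) x := ((hγAn.deriv) x hx).differentiableAt
    have hγeAn : AnalyticOnNhd ℂ (γe e) V := fun t ht => hγez e t ht
    have hd2 : DifferentiableAt ℂ (deriv (γe e)) (f e x) :=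
      ((hγeAn.deriv) _ (hmemV e x hx)).differentiableAt
    have hpl : DifferentiableAt ℝ (fun t => H e (γ t)) x :=
      (hHd2 e (γ x)).comp x (hγd.restrictScalars ℝ)
    have hLHS : wd (fun t => H e (γ t) * deriv γ t) x
        = H e (γ x) * deriv (deriv γ) x + deriv γ x * (K e (γ x) * deriv γ x) := by
      rw [wd_mul hpl (hd1.restrictScalars ℝ)]
      rw [wd_of_diffC hd1]
      have : wd (fun t => H e (γ t)) x = K e (γ x) * deriv γ x :=
        wd_comp_inner (hHd2 e (γ x)) hγd
      rw [this]
    have hpr : DifferentiableAt ℝ (fun t => deriv (γe e) (f e t)) x :=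
      (hd2.restrictScalars ℝ).comp x (hfd2 e x)
    have hRHS : wd (fun t => deriv (γe e) (f e t) * H e t) x
        = deriv (γe e) (f e x) * K e x
          + H e x * (deriv (deriv (γe e)) (f e x) * H e x) := by
      rw [wd_mul hpr (hHd2 e x)]
      have h1 : wd (fun t => deriv (γe e) (f e t)) x
          = deriv (deriv (γe e)) (f e x) * H e x :=
        wd_comp_outer hd2 (hfd2 e x)
      rw [h1]
    have heq : (fun t => H e (γ t) * deriv γ t)
        =ᶠ[nhds x] (fun t => deriv (γe e) (f e t) * H e t) := by
      filter_upwards [hΩ.mem_nhds hx] with t ht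
      exact eq1 e t ht
    rw [← hLHS, wd_congr heq, hRHS]
  -- nonvanishing of H e z near 0
  have hne : ∀ᶠ e in nhds 0, H e z ≠ 0 := by
    have hc : ContinuousAt (fun e => H e z) 0 := (fact1 z).continuousAt
    have h1 : H 0 z ≠ 0 := by rw [fact3]; exact one_ne_zero
    exact hc.eventually_ne h1
  set gp := deriv γ z with hgp
  have hgp0 : gp ≠ 0 := hγ' z hz
  set ddγ := deriv (deriv γ) z with hddγ
  set B : ℂ → ℂ := fun e => gp * H e (γ z) / H e z with hBdef
  have hB0 : B 0 = gp := by rw [hBdef]; simp [fact3]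
  have hAB : (fun e => deriv (γe e) (f e z)) =ᶠ[nhds 0] B := by
    filter_upwards [hne] with e he
    rw [hBdef]
    simp only
    rw [eq_div_iff he]
    linear_combination -(eq1 e z hz)
  have hBd : HasDerivAt B
      ((gp * wd fd (γ z) * H 0 z - gp * H 0 (γ z) * wd fd z) / H 0 z ^ 2) 0 :=
    HasDerivAt.div ((fact1 (γ z)).const_mul gp) (fact1 z)
      (by rw [fact3]; exact one_ne_zero)
  constructor
  · have hcg : (fun ε => ((Real.log (Complex.normSq (deriv (γe ε) (f ε z))) : ℝ) : ℂ))
        =ᶠ[nhds 0] fun ε => ((Real.log (Complex.normSq (B ε)) : ℝ) : ℂ) := by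
      filter_upwards [hAB] with e he
      rw [he]
    rw [wd_congr hcg, wd_log_normSq hBd (by rw [hB0]; exact hgp0)]
    rw [hB0, fact3, fact3]
    field_simp
  · have hnum : HasDerivAt
        (fun e => H e (γ z) * ddγ + gp * (K e (γ z) * gp) - B e * K e z)
        ((wd fd (γ z) * ddγ + gp * (wd (fun t => wd fd t) (γ z) * gp))
          - (((gp * wd fd (γ z) * H 0 z - gp * H 0 (γ z) * wd fd z) / H 0 z ^ 2) * K 0 z
            + B 0 * wd (fun t => wd fd t) z)) 0 :=
      (((fact1 (γ z)).mul_const ddγ).add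
        (((fact2 (γ z)).mul_const gp).const_mul gp)).sub (hBd.mul (fact2 z))
    have hden : HasDerivAt (fun e => H e z ^ 2)
        ((2 : ℕ) * H 0 z ^ (2 - 1) * wd fd z) 0 := (fact1 z).pow 2
    have hfrac := hnum.div hden (by rw [fact3]; norm_num)
    have htot : HasDerivAt (fun e =>
        ((H e (γ z) * ddγ + gp * (K e (γ z) * gp) - B e * K e z) / H e z ^ 2) / B e) _ 0 :=
      hfrac.div hBd (by rw [hB0]; exact hgp0)
    have hev : (fun e => deriv (deriv (γe e)) (f e z) / deriv (γe e) (f e z))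
        =ᶠ[nhds 0] (fun e =>
          ((H e (γ z) * ddγ + gp * (K e (γ z) * gp) - B e * K e z) / H e z ^ 2) / B e) := by
      filter_upwards [hne, hAB] with e he hAe
      rw [hAe]
      congr 1
      rw [eq_div_iff (pow_ne_zero 2 he)]
      have h2 := eq2 e z hz
      rw [hAe] at h2
      linear_combination -h2
    rw [wd_congr hev, wd_of_diffC htot.differentiableAt, htot.deriv]
    simp only [Pi.div_apply]
    rw [fact3, fact3, fact4, fact4, hB0]
    field_simp
    ring
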